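/- arXiv:1410.3764 — 6 statements merged into one kernel-verified Lean document; each statement's English description precedes it below -/
import Mathlib

section
/- For any integers n ≥ 1, α ≥ 1, k ≥ 1 and integer vector (x_0, x_1, ..., x_k) satisfying (1+α)x_0 ≤ n, (x_0+...+x_i)(1+x_i) ≤ n−i for all 1 ≤ i ≤ k, x_1 ≥ x_2 ≥ ... ≥ x_k ≥ 0, and x_0+...+x_k ≥ 0, there exists an integer k' ≥ 1 and an integer vector (x'_0, ..., x'_{k'}) satisfying the same system with x'_0 = ⌊n/(1+α)⌋ and x'_0+...+x'_{k'} ≥ x_0+...+x_k. -/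
/-!
Write `s_i = x_0 + ⋯ + x_i` and `m = ⌊n/(1+α)⌋ ≥ x_0`. If `s_k ≤ m`, the vector `(m, 0)` with
`k' = 1` works. Otherwise raise `x_0` one unit at a time up to `m`, each time lowering by one the
last entry `x_p` equal to the maximum `x_1`; this keeps the system and the total `s_k`. For
`i ≥ p` the partial sum `s_i` is unchanged while `x_i` does not grow; for `i < p` the new
constraint is dominated by the old one at `p`, since `s_i + 1 ≤ s_p` and `x_i = x_p`.
-/

open Finset

theorem mul_le_of_le_of_mul_le {R : Type*} [Semiring R] [LinearOrder R] [IsOrderedRing R]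
    {a b c d N : R} (hab : a ≤ b) (hc : 0 ≤ c) (hcd : c ≤ d) (hN : 0 ≤ N) (h : b * d ≤ N) :
    a * c ≤ N := by
  rcases le_or_gt a 0 with ha | ha
  · exact (mul_nonpos_of_nonpos_of_nonneg ha hc).trans hN
  · exact (mul_le_mul hab hcd hc (ha.le.trans hab)).trans h

def partialSum (x : ℕ → ℤ) (i : ℕ) : ℤ := x 0 + ∑ j ∈ Icc 1 i, x j

theorem partialSum_succ (x : ℕ → ℤ) (i : ℕ) :
    partialSum x (i + 1) = partialSum x i + x (i + 1) := by
  rw [partialSum, partialSum, sum_Icc_succ_top (by omega), add_assoc]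

structure IsSolution (n α : ℤ) (k : ℕ) (x : ℕ → ℤ) : Prop where
  head_le : (1 + α) * x 0 ≤ n
  partialSum_mul_le : ∀ i, 1 ≤ i → i ≤ k → partialSum x i * (1 + x i) ≤ n - i
  succ_le : ∀ i, 1 ≤ i → i < k → x (i + 1) ≤ x i
  last_nonneg : 0 ≤ x k
  partialSum_nonneg : 0 ≤ partialSum x k

theorem isSolution_single {n α m : ℤ} (hα : 1 ≤ α) (hm : (1 + α) * m ≤ n) (hm0 : 0 ≤ m)
    (hn : 1 ≤ n) : IsSolution n α 1 (fun j => if j = 0 then m else 0) where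
  head_le := by simpa using hm
  partialSum_mul_le i hi hi1 := by
    obtain rfl : i = 1 := by omega
    show (m + 0) * (1 + 0) ≤ n - 1
    nlinarith
  succ_le _ _ _ := by omega
  last_nonneg := by simp
  partialSum_nonneg := by simpa [partialSum] using hm0

def moveUnitToHead (x : ℕ → ℤ) (p j : ℕ) : ℤ :=
  x j + (if j = 0 then 1 else 0) - (if j = p then 1 else 0)

section moveUnitToHead

variable {x : ℕ → ℤ} {p : ℕ}

theorem moveUnitToHead_zero (hp : 1 ≤ p) : moveUnitToHead x p 0 = x 0 + 1 := by
  rw [moveUnitToHead, if_pos rfl, if_neg (by omega), sub_zero]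

theorem moveUnitToHead_of_pos {j : ℕ} (hj : 1 ≤ j) :
    moveUnitToHead x p j = x j - if j = p then 1 else 0 := by
  rw [moveUnitToHead, if_neg (by omega), add_zero]

theorem partialSum_moveUnitToHead (hp : 1 ≤ p) (i : ℕ) :
    partialSum (moveUnitToHead x p) i = partialSum x i + 1 - if p ≤ i then 1 else 0 := by
  simp only [partialSum, moveUnitToHead, sum_sub_distrib, sum_add_distrib, sum_ite_eq', mem_Icc]
  split_ifs <;> omega

end moveUnitToHead

namespace IsSolution

variable {n α : ℤ} {k : ℕ} {x : ℕ → ℤ}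

theorem antitoneOn (hx : IsSolution n α k x) : AntitoneOn x (Set.Icc 1 k) :=
  antitoneOn_of_add_one_le Set.ordConnected_Icc fun i _ hi hi' =>
    hx.succ_le i hi.1 (by simpa using hi'.2)

theorem nonneg (hx : IsSolution n α k x) {j : ℕ} (hj : 1 ≤ j) (hjk : j ≤ k) : 0 ≤ x j :=
  hx.last_nonneg.trans (hx.antitoneOn ⟨hj, hjk⟩ ⟨hj.trans hjk, le_rfl⟩ hjk)

theorem natCast_le (hx : IsSolution n α k x) (hk : 1 ≤ k) {i : ℕ} (hik : i ≤ k) : (i : ℤ) ≤ n := by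
  have := hx.partialSum_mul_le k hk le_rfl
  have := mul_nonneg hx.partialSum_nonneg (by linarith [hx.last_nonneg] : (0 : ℤ) ≤ 1 + x k)
  omega

theorem partialSum_mono (hx : IsSolution n α k x) {i j : ℕ} (hij : i ≤ j) (hjk : j ≤ k) :
    partialSum x i ≤ partialSum x j :=
  add_le_add_right (sum_le_sum_of_subset_of_nonneg (Icc_subset_Icc_right hij) fun _ hl _ =>
    hx.nonneg (mem_Icc.1 hl).1 ((mem_Icc.1 hl).2.trans hjk)) _

theorem moveUnitToHead (hx : IsSolution n α k x) {p : ℕ} (hhead : (1 + α) * (x 0 + 1) ≤ n)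
    (hp : 1 ≤ p) (hpk : p ≤ k) (hxp : 1 ≤ x p) (hflat : ∀ i, 1 ≤ i → i ≤ p → x i = x p)
    (hdrop : p < k → x (p + 1) < x p) : IsSolution n α k (moveUnitToHead x p) where
  head_le := by rwa [moveUnitToHead_zero hp]
  partialSum_mul_le i hi hik := by
    have hni : (0 : ℤ) ≤ n - i := by linarith [hx.natCast_le (hp.trans hpk) hik]
    rw [partialSum_moveUnitToHead hp, moveUnitToHead_of_pos hi]
    by_cases hpi : p ≤ i
    · refine mul_le_of_le_of_mul_le (by simp [hpi]) ?_ ?_ hni (hx.partialSum_mul_le i hi hik)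
      · have := hx.nonneg hi hik
        split_ifs <;> omega
      · split_ifs <;> omega
    · have hsucc : partialSum x i + 1 ≤ partialSum x p := by
        have := hx.partialSum_mono (show i + 1 ≤ p by omega) hpk
        rw [partialSum_succ, hflat (i + 1) (by omega) (by omega)] at this
        omega
      refine mul_le_of_le_of_mul_le (b := partialSum x p) (d := 1 + x p) (by simpa [hpi]) ?_ ?_ hni
        ((hx.partialSum_mul_le p hp hpk).trans (by omega))
      · simp only [show i ≠ p by omega, if_false]; linarith [hx.nonneg hi hik]
      · simp only [show i ≠ p by omega, if_false, hflat i hi (by omega), sub_zero, le_refl]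
  succ_le i hi hik := by
    rw [moveUnitToHead_of_pos hi, moveUnitToHead_of_pos (by omega)]
    have := hx.succ_le i hi hik
    rcases eq_or_ne i p with rfl | hip
    · have := hdrop hik
      split_ifs <;> omega
    · split_ifs <;> omega
  last_nonneg := by
    rw [moveUnitToHead_of_pos (hp.trans hpk)]
    have := hx.last_nonneg
    split_ifs with h
    · subst h; omega
    · omega
  partialSum_nonneg := by
    rw [partialSum_moveUnitToHead hp, if_pos hpk]
    simpa using hx.partialSum_nonneg

theorem exists_head_succ (hx : IsSolution n α k x) (hhead : (1 + α) * (x 0 + 1) ≤ n)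
    (hlt : x 0 < partialSum x k) :
    ∃ y, IsSolution n α k y ∧ y 0 = x 0 + 1 ∧ partialSum y k = partialSum x k := by
  classical
  obtain ⟨j, hj, hxj⟩ := exists_lt_of_sum_lt (f := fun _ => (0 : ℤ)) (s := Icc 1 k) (g := x)
    (by simpa [partialSum] using hlt)
  obtain ⟨hj1, hjk⟩ := mem_Icc.1 hj
  have hk : 1 ≤ k := hj1.trans hjk
  have hx1 : 1 ≤ x 1 := (hx.antitoneOn ⟨le_rfl, hk⟩ ⟨hj1, hjk⟩ hj1).trans' hxj
  set p := Nat.findGreatest (fun j => x j = x 1) k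
  have hp : 1 ≤ p := Nat.le_findGreatest hk rfl
  have hpk : p ≤ k := Nat.findGreatest_le k
  have hxp : x p = x 1 := Nat.findGreatest_spec (P := fun j => x j = x 1) hk rfl
  refine ⟨_, hx.moveUnitToHead hhead hp hpk (by omega) ?_ ?_, moveUnitToHead_zero hp, ?_⟩
  · intro i hi hip
    have := hx.antitoneOn ⟨le_rfl, hk⟩ ⟨hi, hip.trans hpk⟩ hi
    have := hx.antitoneOn ⟨hi, hip.trans hpk⟩ ⟨hp, hpk⟩ hip
    omega
  · intro hpk'
    have := hx.succ_le p hp hpk'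
    have := Nat.findGreatest_is_greatest (lt_add_one p) hpk'
    omega
  · rw [partialSum_moveUnitToHead hp, if_pos hpk]
    ring

theorem exists_head_eq (hx : IsSolution n α k x) (hα : 0 ≤ 1 + α) {m : ℤ}
    (hm : (1 + α) * m ≤ n) (hxm : x 0 ≤ m) (hmS : m ≤ partialSum x k) :
    ∃ y, IsSolution n α k y ∧ y 0 = m ∧ partialSum y k = partialSum x k := by
  obtain ⟨d, hd⟩ : ∃ d : ℕ, x 0 + d = m := ⟨(m - x 0).toNat, by omega⟩
  induction d generalizing x with
  | zero => exact ⟨x, hx, by simpa using hd, rfl⟩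
  | succ d ih =>
    obtain ⟨y, hy, hy0, hyS⟩ := hx.exists_head_succ
      (hm.trans' (mul_le_mul_of_nonneg_left (by omega) hα)) (by omega)
    obtain ⟨z, hz, hz0, hzS⟩ := ih hy (by omega) (hyS ▸ hmS) (by omega)
    exact ⟨z, hz, hz0, hzS.trans hyS⟩

end IsSolution

theorem stmt_0_general (n α : ℤ) (hα : 1 ≤ α)
    (k : ℕ) (hk : 1 ≤ k) (x : ℕ → ℤ)
    (h0 : (1 + α) * x 0 ≤ n)
    (h1 : ∀ i, 1 ≤ i → i ≤ k →
      (x 0 + ∑ j ∈ Finset.Icc 1 i, x j) * (1 + x i) ≤ n - (i : ℤ))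
    (h2 : ∀ i, 1 ≤ i → i < k → x (i + 1) ≤ x i)
    (h3 : 0 ≤ x k)
    (h4 : 0 ≤ x 0 + ∑ j ∈ Finset.Icc 1 k, x j) :
    ∃ (k' : ℕ) (x' : ℕ → ℤ), 1 ≤ k' ∧
      x' 0 = n / (1 + α) ∧
      (1 + α) * x' 0 ≤ n ∧
      (∀ i, 1 ≤ i → i ≤ k' →
        (x' 0 + ∑ j ∈ Finset.Icc 1 i, x' j) * (1 + x' i) ≤ n - (i : ℤ)) ∧
      (∀ i, 1 ≤ i → i < k' → x' (i + 1) ≤ x' i) ∧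
      0 ≤ x' k' ∧
      0 ≤ x' 0 + ∑ j ∈ Finset.Icc 1 k', x' j ∧
      x 0 + ∑ j ∈ Finset.Icc 1 k, x j ≤ x' 0 + ∑ j ∈ Finset.Icc 1 k', x' j := by
  have hx : IsSolution n α k x := ⟨h0, h1, h2, h3, h4⟩
  suffices ∃ k' y, 1 ≤ k' ∧ y 0 = n / (1 + α) ∧ IsSolution n α k' y ∧
      partialSum x k ≤ partialSum y k' by
    obtain ⟨k', y, hk', hy0, hy, hS⟩ := this
    exact ⟨k', y, hk', hy0, hy.head_le, hy.partialSum_mul_le, hy.succ_le, hy.last_nonneg,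
      hy.partialSum_nonneg, hS⟩
  have hpos : 0 < 1 + α := by omega
  have hm : (1 + α) * (n / (1 + α)) ≤ n := Int.mul_ediv_self_le hpos.ne'
  have hxm : x 0 ≤ n / (1 + α) := (Int.le_ediv_iff_mul_le hpos).2 (by linarith)
  rcases le_or_gt (partialSum x k) (n / (1 + α)) with hsmall | hlarge
  · refine ⟨1, _, le_rfl, rfl, isSolution_single hα hm (hx.partialSum_nonneg.trans hsmall)
      (by simpa using hx.natCast_le hk hk), by simpa [partialSum] using hsmall⟩
  · obtain ⟨y, hy, hy0, hyS⟩ := hx.exists_head_eq hpos.le hm hxm hlarge.le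
    exact ⟨k, y, hk, hy0, hy, hyS.ge⟩

theorem stmt_0 (n α : ℤ) (hn : 1 ≤ n) (hα : 1 ≤ α)
    (k : ℕ) (hk : 1 ≤ k) (x : ℕ → ℤ)
    (h0 : (1 + α) * x 0 ≤ n)
    (h1 : ∀ i, 1 ≤ i → i ≤ k →
      (x 0 + ∑ j ∈ Finset.Icc 1 i, x j) * (1 + x i) ≤ n - (i : ℤ))
    (h2 : ∀ i, 1 ≤ i → i < k → x (i + 1) ≤ x i)
    (h3 : 0 ≤ x k)
    (h4 : 0 ≤ x 0 + ∑ j ∈ Finset.Icc 1 k, x j) :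
    ∃ (k' : ℕ) (x' : ℕ → ℤ), 1 ≤ k' ∧
      x' 0 = n / (1 + α) ∧
      (1 + α) * x' 0 ≤ n ∧
      (∀ i, 1 ≤ i → i ≤ k' →
        (x' 0 + ∑ j ∈ Finset.Icc 1 i, x' j) * (1 + x' i) ≤ n - (i : ℤ)) ∧
      (∀ i, 1 ≤ i → i < k' → x' (i + 1) ≤ x' i) ∧
      0 ≤ x' k' ∧
      0 ≤ x' 0 + ∑ j ∈ Finset.Icc 1 k', x' j ∧
      x 0 + ∑ j ∈ Finset.Icc 1 k, x j ≤ x' 0 + ∑ j ∈ Finset.Icc 1 k', x' j :=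
  stmt_0_general n α hα k hk x h0 h1 h2 h3 h4
end

section
/- Suppose integers n, α, k and an integer vector (x_0, x_1, ..., x_k) satisfy: (1+α)x_0 ≤ n, (x_0+...+x_i)(1+x_i) ≤ n−i for i = 1,...,k, x_1 ≥ ... ≥ x_k ≥ 0, x_0+...+x_k ≥ 0, and x_0 < ⌊n/(1+α)⌋ with x_1 > 0. Let j be the greatest index with x_j = x_1, and define x'_0 = x_0+1, x'_j = x_j−1, and x'_i = x_i otherwise. Then (x'_0, ..., x'_k) also satisfies the system, and x'_0+...+x'_k = x_0+...+x_k. -/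
/-!
Moving one unit from `x_j` to `x_0` leaves the prefix sums `S_i = x_0 + ⋯ + x_i` unchanged for
`i ≥ j` and raises them by one for `i < j`. At `i = j` the factor `1 + x_j` drops by one, which
only helps. For `i < j` the constraint at `j` provides the slack: `x` is constant equal to `x_1`
on `[1, j]`, so `S_j = S_i + (j - i) x_1 ≥ S_i + 1`. Since `j` is the last index where `x` attains
`x_1`, lowering `x_j` by one keeps the sequence nonincreasing.
-/

open Finset

def prefixSum (x : ℕ → ℤ) (i : ℕ) : ℤ := x 0 + ∑ m ∈ Icc 1 i, x m

def unitTransfer (x : ℕ → ℤ) (j i : ℕ) : ℤ :=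
  if i = 0 then x 0 + 1 else if i = j then x j - 1 else x i

theorem mul_le_of_mul_one_add_le {R : Type*} [CommRing R] [LinearOrder R] [IsStrictOrderedRing R]
    {s c m : R} (hc : 0 ≤ c) (hm : 0 ≤ m) (h : s * (1 + c) ≤ m) : s * c ≤ m := by
  rcases le_or_gt 0 s with hs | hs
  · nlinarith [mul_nonneg hs hc]
  · nlinarith [mul_nonpos_of_nonpos_of_nonneg hs.le hc]

theorem AntitoneOn.eq_of_mem_Icc_of_eq {α β : Type*} [Preorder α] [PartialOrder β] {f : α → β}
    {a b c i : α} (hf : AntitoneOn f (Set.Icc a b)) (hcb : c ≤ b) (hfc : f c = f a)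
    (hai : a ≤ i) (hic : i ≤ c) : f i = f a := by
  have hab : a ≤ b := hai.trans (hic.trans hcb)
  refine le_antisymm (hf ⟨le_rfl, hab⟩ ⟨hai, hic.trans hcb⟩ hai) ?_
  rw [← hfc]
  exact hf ⟨hai, hic.trans hcb⟩ ⟨hai.trans hic, hcb⟩ hic

theorem antitoneOn_Icc_of_succ_le {β : Type*} [Preorder β] {x : ℕ → β} {a b : ℕ}
    (h : ∀ i, a ≤ i → i < b → x (i + 1) ≤ x i) : AntitoneOn x (Set.Icc a b) :=
  antitoneOn_of_succ_le Set.ordConnected_Icc fun i _ hi hsi => by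
    rw [Order.succ_eq_add_one] at hsi ⊢
    exact h i hi.1 hsi.2

section Transfer

variable {x : ℕ → ℤ} {j i : ℕ}

@[simp] theorem unitTransfer_zero : unitTransfer x j 0 = x 0 + 1 := by
  simp [unitTransfer]

theorem unitTransfer_self (hj : j ≠ 0) : unitTransfer x j j = x j - 1 := by
  simp [unitTransfer, hj]

theorem unitTransfer_of_ne (hi : i ≠ 0) (hij : i ≠ j) : unitTransfer x j i = x i := by
  simp [unitTransfer, hi, hij]

theorem prefixSum_unitTransfer (hj : j ≠ 0) :
    prefixSum (unitTransfer x j) i = prefixSum x i + if i < j then 1 else 0 := by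
  have hterm : ∀ m ∈ Icc 1 i, unitTransfer x j m = x m - if m = j then 1 else 0 := by
    intro m hm
    have hm0 : m ≠ 0 := by grind
    by_cases hmj : m = j
    · subst hmj; simp [unitTransfer_self hj]
    · simp [unitTransfer_of_ne hm0 hmj, hmj]
  rw [prefixSum, prefixSum, sum_congr rfl hterm, sum_sub_distrib, sum_ite_eq', unitTransfer_zero]
  simp only [mem_Icc]
  split_ifs <;> omega

theorem prefixSum_eq_add_sum_Ioc (hij : i ≤ j) :
    prefixSum x j = prefixSum x i + ∑ m ∈ Ioc i j, x m := by
  have hIcc : ∀ m, Icc 1 m = Ioc 0 m := Icc_add_one_left_eq_Ioc 0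
  rw [prefixSum, prefixSum, hIcc, hIcc, ← sum_Ioc_consecutive x (Nat.zero_le i) hij, add_assoc]

end Transfer

section System

variable {n : ℤ} {k j i : ℕ} {x : ℕ → ℤ}

theorem prefixSum_add_one_mul_le (hflat : ∀ m, 1 ≤ m → m ≤ j → x m = x 1) (hx1 : 0 < x 1)
    (hi : 1 ≤ i) (hij : i < j) (hj : prefixSum x j * (1 + x j) ≤ n - j) :
    (prefixSum x i + 1) * (1 + x i) ≤ n - i := by
  have hsum : prefixSum x j = prefixSum x i + (j - i) * x 1 := by
    rw [prefixSum_eq_add_sum_Ioc hij.le,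
      sum_congr rfl fun m hm => hflat m (by grind) (mem_Ioc.mp hm).2, sum_const,
      Nat.card_Ioc, nsmul_eq_mul, Nat.cast_sub hij.le]
  rw [hflat j (by omega) le_rfl, hsum] at hj
  have hslack : (1 : ℤ) ≤ (j - i) * x 1 :=
    one_le_mul_of_one_le_of_one_le (by omega) (by omega)
  rw [hflat i hi hij.le]
  calc (prefixSum x i + 1) * (1 + x 1)
      ≤ (prefixSum x i + (j - i) * x 1) * (1 + x 1) := by gcongr
    _ ≤ n - j := hj
    _ ≤ n - i := by omega

theorem prefixSum_unitTransfer_mul_le (hflat : ∀ m, 1 ≤ m → m ≤ j → x m = x 1)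
    (hx1 : 0 < x 1) (hj1 : 1 ≤ j) (hjk : j ≤ k) (hkn : (k : ℤ) ≤ n)
    (h1 : ∀ i, 1 ≤ i → i ≤ k → prefixSum x i * (1 + x i) ≤ n - i) :
    ∀ i, 1 ≤ i → i ≤ k → prefixSum (unitTransfer x j) i * (1 + unitTransfer x j i) ≤ n - i := by
  intro i hi hik
  rw [prefixSum_unitTransfer (by omega)]
  rcases lt_trichotomy i j with hij | rfl | hji
  · rw [if_pos hij, unitTransfer_of_ne (by omega) hij.ne]
    exact prefixSum_add_one_mul_le hflat hx1 hi hij (h1 j hj1 hjk)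
  · rw [if_neg (lt_irrefl i), add_zero, unitTransfer_self (by omega), add_sub_cancel]
    exact mul_le_of_mul_one_add_le (by rw [hflat i hi le_rfl]; omega) (by omega) (h1 i hi hik)
  · rw [if_neg (by omega), add_zero, unitTransfer_of_ne (by omega) hji.ne']
    exact h1 i hi hik

theorem unitTransfer_succ_le (hj1 : 1 ≤ j) (hflat : ∀ m, 1 ≤ m → m ≤ j → x m = x 1)
    (h2 : ∀ i, 1 ≤ i → i < k → x (i + 1) ≤ x i) (hjmax : ∀ i, j < i → i ≤ k → x i ≠ x 1) :
    ∀ i, 1 ≤ i → i < k → unitTransfer x j (i + 1) ≤ unitTransfer x j i := by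
  intro i hi hik
  rcases lt_trichotomy (i + 1) j with hij | hij | hji
  · rw [unitTransfer_of_ne (by omega) hij.ne, unitTransfer_of_ne (by omega) (by omega)]
    exact h2 i hi hik
  · rw [hij, unitTransfer_self (by omega), unitTransfer_of_ne (by omega) (by omega),
      hflat j hj1 le_rfl, hflat i hi (by omega)]
    omega
  · rcases eq_or_ne i j with rfl | hij
    · have hlt : x (i + 1) ≠ x 1 := hjmax (i + 1) (by omega) (by omega)
      have hle := h2 i hi hik
      rw [unitTransfer_self (by omega), unitTransfer_of_ne (by omega) (by omega)]
      rw [hflat i hi le_rfl] at hle ⊢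
      omega
    · rw [unitTransfer_of_ne (by omega) (by omega), unitTransfer_of_ne (by omega) hij]
      exact h2 i hi hik

end System

theorem stmt_1_general (n α : ℤ) (hα : 1 ≤ α)
    (k : ℕ) (x : ℕ → ℤ)
    (h1 : ∀ i, 1 ≤ i → i ≤ k →
      (x 0 + ∑ j ∈ Finset.Icc 1 i, x j) * (1 + x i) ≤ n - (i : ℤ))
    (h2 : ∀ i, 1 ≤ i → i < k → x (i + 1) ≤ x i)
    (h3 : 0 ≤ x k)
    (h4 : 0 ≤ x 0 + ∑ j ∈ Finset.Icc 1 k, x j)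
    (hx0 : x 0 < n / (1 + α)) (hx1 : 0 < x 1)
    (j : ℕ) (hj1 : 1 ≤ j) (hjk : j ≤ k) (hxj : x j = x 1)
    (hjmax : ∀ i, j < i → i ≤ k → x i ≠ x 1)
    (x' : ℕ → ℤ)
    (hx' : ∀ i, x' i = if i = 0 then x 0 + 1 else if i = j then x j - 1 else x i) :
    (1 + α) * x' 0 ≤ n ∧
    (∀ i, 1 ≤ i → i ≤ k →
      (x' 0 + ∑ j' ∈ Finset.Icc 1 i, x' j') * (1 + x' i) ≤ n - (i : ℤ)) ∧
    (∀ i, 1 ≤ i → i < k → x' (i + 1) ≤ x' i) ∧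
    0 ≤ x' k ∧
    0 ≤ x' 0 + ∑ j' ∈ Finset.Icc 1 k, x' j' ∧
    x' 0 + ∑ j' ∈ Finset.Icc 1 k, x' j' = x 0 + ∑ j' ∈ Finset.Icc 1 k, x j' := by
  obtain rfl : x' = unitTransfer x j := funext hx'
  have hflat : ∀ i, 1 ≤ i → i ≤ j → x i = x 1 := fun i hi hij =>
    (antitoneOn_Icc_of_succ_le h2).eq_of_mem_Icc_of_eq hjk hxj hi hij
  have hkn : (k : ℤ) ≤ n := by
    nlinarith [h1 k (hj1.trans hjk) le_rfl, mul_nonneg h4 (by omega : (0 : ℤ) ≤ 1 + x k)]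
  have htotal : prefixSum (unitTransfer x j) k = prefixSum x k := by
    rw [prefixSum_unitTransfer (by omega), if_neg (by omega), add_zero]
  refine ⟨?_, prefixSum_unitTransfer_mul_le hflat hx1 hj1 hjk hkn h1,
    unitTransfer_succ_le hj1 hflat h2 hjmax, ?_, h4.trans_eq htotal.symm, htotal⟩
  · rw [unitTransfer_zero, mul_comm]
    exact (Int.le_ediv_iff_mul_le (by omega)).mp hx0
  · rcases eq_or_ne k j with rfl | hkj
    · rw [unitTransfer_self (by omega)]
      omega
    · rw [unitTransfer_of_ne (by omega) hkj]
      exact h3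

theorem stmt_1 (n α : ℤ) (hn : 1 ≤ n) (hα : 1 ≤ α)
    (k : ℕ) (hk : 1 ≤ k) (x : ℕ → ℤ)
    (h0 : (1 + α) * x 0 ≤ n)
    (h1 : ∀ i, 1 ≤ i → i ≤ k →
      (x 0 + ∑ j ∈ Finset.Icc 1 i, x j) * (1 + x i) ≤ n - (i : ℤ))
    (h2 : ∀ i, 1 ≤ i → i < k → x (i + 1) ≤ x i)
    (h3 : 0 ≤ x k)
    (h4 : 0 ≤ x 0 + ∑ j ∈ Finset.Icc 1 k, x j)
    (hx0 : x 0 < n / (1 + α)) (hx1 : 0 < x 1)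
    (j : ℕ) (hj1 : 1 ≤ j) (hjk : j ≤ k) (hxj : x j = x 1)
    (hjmax : ∀ i, j < i → i ≤ k → x i ≠ x 1)
    (x' : ℕ → ℤ)
    (hx' : ∀ i, x' i = if i = 0 then x 0 + 1 else if i = j then x j - 1 else x i) :
    (1 + α) * x' 0 ≤ n ∧
    (∀ i, 1 ≤ i → i ≤ k →
      (x' 0 + ∑ j' ∈ Finset.Icc 1 i, x' j') * (1 + x' i) ≤ n - (i : ℤ)) ∧
    (∀ i, 1 ≤ i → i < k → x' (i + 1) ≤ x' i) ∧
    0 ≤ x' k ∧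
    0 ≤ x' 0 + ∑ j' ∈ Finset.Icc 1 k, x' j' ∧
    x' 0 + ∑ j' ∈ Finset.Icc 1 k, x' j' = x 0 + ∑ j' ∈ Finset.Icc 1 k, x j' :=
  stmt_1_general n α hα k x h1 h2 h3 h4 hx0 hx1 j hj1 hjk hxj hjmax x' hx'
end

section
/- Let m ≥ 1 and consider the real sequence (y_1, ..., y_m) uniquely determined by the linear system P_i(y) = n − i·x_0 for i = 1,...,m, where P_i(y) = Σ_{j=i}^{m} (1+(j−1)i) y_j. Then this sequence satisfies the recurrence y_i = y_{i+1}·(i+1)²/(1−i+i²) for i = 1,...,m−2, together with y_m = (n − m·x_0)/(1+m(m−1)) and y_{m−1} = (x_0 + (m−1)y_m)/(1+(m−1)(m−2)). -/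
/-!
The coefficient `1 + (j - 1) i` of `y j` in `P_i` is affine in `i`, so in the second difference
`P_i - 2 P_{i+1} + P_{i+2}` every `y j` with `j ≥ i + 2` cancels, as does the right-hand side
`n - i x₀`. What is left is the two-term relation `(1 - i + i²) y_i = (i + 1)² y_{i+1}`.
The last two equations `P_m` and `P_{m-1} - P_m` are solved directly. All denominators have the
form `1 - x + x² > 0`.
-/

open Finset

lemma one_sub_add_sq_pos (x : ℝ) : 0 < 1 - x + x ^ 2 := by
  nlinarith [sq_nonneg (2 * x - 1)]

lemma sum_Icc_eq_add_sum_Icc_succ {M : Type*} [AddCommMonoid M] (f : ℕ → M) {a b : ℕ}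
    (h : a ≤ b) : ∑ j ∈ Icc a b, f j = f a + ∑ j ∈ Icc (a + 1) b, f j := by
  rw [Icc_add_one_left_eq_Ioc, add_sum_Ioc_eq_sum_Icc h]

lemma sum_affine_second_diff {ι : Type*} (s : Finset ι) (a b y : ι → ℝ) (t : ℝ) :
    ∑ j ∈ s, (a j + b j * t) * y j - 2 * ∑ j ∈ s, (a j + b j * (t + 1)) * y j
      + ∑ j ∈ s, (a j + b j * (t + 2)) * y j = 0 := by
  rw [mul_sum, ← sum_sub_distrib, ← sum_add_distrib]
  exact sum_eq_zero fun j _ => by ring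

/-- The left-hand side `P_i(y)` of the `i`-th equation of the system. -/
def tailSum (m : ℕ) (y : ℕ → ℝ) (i : ℕ) : ℝ :=
  ∑ j ∈ Icc i m, (1 + ((j : ℝ) - 1) * i) * y j

lemma tailSum_self (m : ℕ) (y : ℕ → ℝ) : tailSum m y m = (1 - m + (m : ℝ) ^ 2) * y m := by
  rw [tailSum, Icc_self, sum_singleton]
  ring

lemma tailSum_sub_tailSum_succ (k : ℕ) (y : ℕ → ℝ) :
    tailSum (k + 1) y k - tailSum (k + 1) y (k + 1)
      = (1 - k + (k : ℝ) ^ 2) * y k - k * y (k + 1) := by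
  rw [tailSum, tailSum, sum_Icc_eq_add_sum_Icc_succ _ k.le_succ, Icc_self, sum_singleton,
    sum_singleton]
  push_cast
  ring

lemma tailSum_second_diff {m i : ℕ} (y : ℕ → ℝ) (h : i + 2 ≤ m) :
    tailSum m y i - 2 * tailSum m y (i + 1) + tailSum m y (i + 2)
      = (1 - i + (i : ℝ) ^ 2) * y i - ((i : ℝ) + 1) ^ 2 * y (i + 1) := by
  have hrest := sum_affine_second_diff (Icc (i + 2) m) (fun _ => 1) (fun j => (j : ℝ) - 1) y i
  simp only [tailSum]
  rw [sum_Icc_eq_add_sum_Icc_succ _ (by omega : i ≤ m),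
    sum_Icc_eq_add_sum_Icc_succ _ (by omega : i + 1 ≤ m),
    sum_Icc_eq_add_sum_Icc_succ _ (by omega : i + 1 ≤ m)]
  push_cast
  linear_combination hrest

theorem stmt_4 (n x₀ : ℝ) (m : ℕ) (hm : 1 ≤ m) (y : ℕ → ℝ)
    (hsys : ∀ i, 1 ≤ i → i ≤ m →
      ∑ j ∈ Finset.Icc i m, (1 + ((j : ℝ) - 1) * (i : ℝ)) * y j = n - (i : ℝ) * x₀) :
    (∀ i, 1 ≤ i → i ≤ m - 2 →
      y i = y (i + 1) * ((i : ℝ) + 1) ^ 2 / (1 - (i : ℝ) + (i : ℝ) ^ 2)) ∧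
    y m = (n - (m : ℝ) * x₀) / (1 + (m : ℝ) * ((m : ℝ) - 1)) ∧
    (2 ≤ m →
      y (m - 1) = (x₀ + ((m : ℝ) - 1) * y m) / (1 + ((m : ℝ) - 1) * ((m : ℝ) - 2))) := by
  have hP : ∀ i, 1 ≤ i → i ≤ m → tailSum m y i = n - i * x₀ := hsys
  have hym := hP m hm le_rfl
  rw [tailSum_self] at hym
  refine ⟨fun i hi him => ?_, ?_, fun h2 => ?_⟩
  · have hdiff := tailSum_second_diff y (by omega : i + 2 ≤ m)
    rw [hP i hi (by omega), hP (i + 1) (by omega) (by omega), hP (i + 2) (by omega) (by omega)]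
      at hdiff
    rw [eq_div_iff (one_sub_add_sq_pos i).ne']
    push_cast at hdiff
    linear_combination -hdiff
  · rw [eq_div_iff (by linarith [one_sub_add_sq_pos m])]
    linear_combination hym
  · obtain ⟨k, rfl⟩ : ∃ k, m = k + 1 := ⟨m - 1, by omega⟩
    have hdiff := tailSum_sub_tailSum_succ k y
    rw [hP k (by omega) (by omega), hP (k + 1) hm le_rfl] at hdiff
    rw [Nat.add_sub_cancel, eq_div_iff (by push_cast; linarith [one_sub_add_sq_pos k])]
    push_cast at hdiff ⊢
    linear_combination -hdiff
end

section
/- Define the real sequence z_1 = 0, z_2 = 1/3, and z_{j+1} = z_j·(j−1)²/(1+j+j²) for j = 2,...,m−1. Then for every j = 1,...,m, one has Σ_{i=1}^{j} (1+(j−1)i) z_i = j − 1. -/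
/-!
Write `S j = ∑_{i ≤ j} (1 + (j - 1) i) z_i` and `B j = ∑_{i ≤ j} i z_i`. Then
`S (j + 1) - S j = B j + (1 + j + j²) z_{j+1}`, and the recurrence turns the last term into
`(j - 1)² z_j`. The quantity `B j + (j - 1)² z_j` is invariant under the recurrence and equals `1`
at `j = 2`, so `S` grows by exactly `1` at each step.
-/

open Finset

lemma sum_Icc_succ_weighted (z : ℕ → ℝ) (j : ℕ) :
    ∑ i ∈ Icc 1 (j + 1), (1 + (((j + 1 : ℕ) : ℝ) - 1) * i) * z i =
      ∑ i ∈ Icc 1 j, (1 + ((j : ℝ) - 1) * i) * z i + ∑ i ∈ Icc 1 j, (i : ℝ) * z i +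
        (1 + j + (j : ℝ) ^ 2) * z (j + 1) := by
  rw [sum_Icc_succ_top (by omega), ← sum_add_distrib]
  push_cast
  congr 1
  · exact sum_congr rfl fun i _ => by ring
  · ring

lemma sum_Icc_mul_add_sq_mul_eq_one {z : ℕ → ℝ} {m : ℕ} (hz1 : z 1 = 0) (hz2 : z 2 = 1 / 3)
    (hrec : ∀ j, 2 ≤ j → j < m → (1 + j + (j : ℝ) ^ 2) * z (j + 1) = ((j : ℝ) - 1) ^ 2 * z j)
    {j : ℕ} (hj : 2 ≤ j) (hjm : j ≤ m) :
    ∑ i ∈ Icc 1 j, (i : ℝ) * z i + ((j : ℝ) - 1) ^ 2 * z j = 1 := by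
  induction j, hj using Nat.le_induction with
  | base =>
    rw [show Icc 1 2 = {1, 2} by decide, sum_pair (by decide)]
    norm_num [hz1, hz2]
  | succ n hn ih =>
    have step := hrec n hn (by omega)
    rw [sum_Icc_succ_top (by omega)]
    push_cast
    linarith [ih (by omega)]

theorem stmt_7_general (m : ℕ) (z : ℕ → ℝ)
    (hz1 : z 1 = 0) (hz2 : z 2 = 1 / 3)
    (hrec : ∀ j, 2 ≤ j → j ≤ m - 1 →
      z (j + 1) = z j * ((j : ℝ) - 1) ^ 2 / (1 + (j : ℝ) + (j : ℝ) ^ 2)) :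
    ∀ j, 1 ≤ j → j ≤ m →
      ∑ i ∈ Finset.Icc 1 j, (1 + ((j : ℝ) - 1) * (i : ℝ)) * z i = (j : ℝ) - 1 := by
  have hrec' : ∀ j, 2 ≤ j → j < m →
      (1 + j + (j : ℝ) ^ 2) * z (j + 1) = ((j : ℝ) - 1) ^ 2 * z j := fun j hj hjm => by
    rw [hrec j hj (by omega), mul_div_cancel₀ _ (by positivity)]
    ring
  intro j hj
  induction j, hj using Nat.le_induction with
  | base => simp [hz1]
  | succ n hn ih =>
    intro hnm
    rw [sum_Icc_succ_weighted, ih (by omega)]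
    rcases (by omega : n = 1 ∨ 2 ≤ n) with rfl | hn2
    · norm_num [hz1, hz2]
    · rw [hrec' n hn2 (by omega), add_assoc,
        sum_Icc_mul_add_sq_mul_eq_one hz1 hz2 hrec' hn2 (by omega)]
      push_cast
      ring

theorem stmt_7 (m : ℕ) (hm : 2 ≤ m) (z : ℕ → ℝ)
    (hz1 : z 1 = 0) (hz2 : z 2 = 1 / 3)
    (hrec : ∀ j, 2 ≤ j → j ≤ m - 1 →
      z (j + 1) = z j * ((j : ℝ) - 1) ^ 2 / (1 + (j : ℝ) + (j : ℝ) ^ 2)) :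
    ∀ j, 1 ≤ j → j ≤ m →
      ∑ i ∈ Finset.Icc 1 j, (1 + ((j : ℝ) - 1) * (i : ℝ)) * z i = (j : ℝ) - 1 :=
  stmt_7_general m z hz1 hz2 hrec
end

section
/- Define F(z, m) = ((m−1)+z)/m · Π_{i=1}^{m−1} (i+i²)/(1+i+i²) for real z ∈ [0,1] and integer m ≥ 1. Then for fixed z > 0, F(z, m) is increasing in m on the range m ≤ 1/z, i.e., if 1 ≤ m < m+1 ≤ 1/z then F(z, m) ≤ F(z, m+1). -/
/-! Passing from `m` to `m + 1` multiplies the product by `(m + m²)/(1 + m + m²)` and changes the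
prefactor from `(m - 1 + z)/m` to `(m + z)/(m + 1)`. After clearing denominators the required
inequality `(m - 1 + z)(1 + m + m²) ≤ (m + z) m²` is exactly `0 ≤ 1 - z (m + 1)`. -/

noncomputable def F (z : ℝ) (m : ℕ) : ℝ :=
  (((m : ℝ) - 1) + z) / (m : ℝ) *
    ∏ i ∈ Finset.Icc 1 (m - 1), ((i : ℝ) + (i : ℝ) ^ 2) / (1 + (i : ℝ) + (i : ℝ) ^ 2)

lemma F_succ {m : ℕ} (hm : 1 ≤ m) (z : ℝ) :
    F z (m + 1) = ((m : ℝ) + z) / ((m : ℝ) + 1) * (((m : ℝ) + (m : ℝ) ^ 2) / (1 + m + (m : ℝ) ^ 2)) *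
      ∏ i ∈ Finset.Icc 1 (m - 1), ((i : ℝ) + (i : ℝ) ^ 2) / (1 + (i : ℝ) + (i : ℝ) ^ 2) := by
  obtain ⟨k, rfl⟩ := Nat.exists_eq_add_of_le' hm
  rw [F, Nat.add_sub_cancel, Finset.prod_Icc_succ_top (by omega), Nat.add_sub_cancel]
  push_cast
  ring

lemma sub_one_add_div_le_add_div_add_one_mul {M z : ℝ} (hM : 0 < M) (hzM : z * (M + 1) ≤ 1) :
    (M - 1 + z) / M ≤ (M + z) / (M + 1) * ((M + M ^ 2) / (1 + M + M ^ 2)) := by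
  rw [div_mul_div_comm, div_le_div_iff₀ hM (by positivity)]
  nlinarith

theorem stmt_9_general (z : ℝ) (hz0 : 0 < z) (m : ℕ) (hm : 1 ≤ m)
    (hle : ((m : ℝ) + 1) ≤ 1 / z) :
    F z m ≤ F z (m + 1) := by
  have hzM : z * ((m : ℝ) + 1) ≤ 1 := by
    rwa [le_div_iff₀ hz0, mul_comm] at hle
  rw [F_succ hm, F]
  gcongr ?_ * _
  exact sub_one_add_div_le_add_div_add_one_mul (by exact_mod_cast hm) hzM

theorem stmt_9 (z : ℝ) (hz0 : 0 < z) (hz1 : z ≤ 1) (m : ℕ) (hm : 1 ≤ m)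
    (hle : ((m : ℝ) + 1) ≤ 1 / z) :
    F z m ≤ F z (m + 1) :=
  stmt_9_general z hz0 m hm hle
end

section
/- The infinite product Π_{i=1}^{∞} (i+i²)/(1+i+i²) converges and equals π/cosh(√3·π/2). -/
/-!
Since `i + i² = i (i + 1)` and `1 + i + i² = (i + ω) (i + 1 - ω)` for `ω = 1/2 + (√3/2) i`, the
`n`-th partial product is `(n + 1) / n` times `Γₙ(ω) Γₙ(1 - ω)`, where `Γₙ` is Euler's sequence
`nˢ n! / (s (s + 1) ⋯ (s + n))` converging to `Γ`. The limit is therefore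
`Γ(ω) Γ(1 - ω) = π / sin (π ω) = π / cosh (√3 π / 2)` by the reflection formula.
-/

open Filter Real

open scoped Nat Topology

namespace Complex

theorem GammaSeq_mul_GammaSeq_one_sub (z : ℂ) {n : ℕ} (hn : n ≠ 0) :
    GammaSeq z n * GammaSeq (1 - z) n =
      n * (n ! : ℂ) ^ 2 / ∏ j ∈ Finset.range (n + 1), ((j : ℂ) ^ 2 + j + z * (1 - z)) := by
  have hpow : (n : ℂ) ^ z * (n : ℂ) ^ (1 - z) = n := by
    rw [← cpow_add _ _ (Nat.cast_ne_zero.mpr hn), add_sub_cancel, cpow_one]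
  rw [GammaSeq, GammaSeq, div_mul_div_comm, ← Finset.prod_mul_distrib,
    mul_mul_mul_comm, hpow, sq]
  congr 1
  exact Finset.prod_congr rfl fun j _ ↦ by ring

theorem sin_pi_mul_half_add_mul_I (y : ℝ) :
    sin (π * (1 / 2 + y * I)) = Real.cosh (π * y) := by
  rw [mul_add, ← mul_div_assoc, mul_one, ← mul_assoc, sin_add, sin_pi_div_two, cos_pi_div_two,
    ← ofReal_mul, cos_mul_I, ofReal_cosh]
  ring

theorem Gamma_half_add_mul_I_mul_Gamma_one_sub (y : ℝ) :
    Gamma (1 / 2 + y * I) * Gamma (1 - (1 / 2 + y * I)) = (π / Real.cosh (π * y) : ℝ) := by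
  rw [Gamma_mul_Gamma_one_sub, sin_pi_mul_half_add_mul_I, ofReal_div]

end Complex

theorem prod_Icc_add_sq_div_one_add_add_sq (n : ℕ) :
    ∏ i ∈ Finset.Icc 1 n, ((i : ℝ) + i ^ 2) / (1 + i + i ^ 2) =
      (n ! : ℝ) * (n + 1)! / ∏ j ∈ Finset.range (n + 1), ((j : ℝ) ^ 2 + j + 1) := by
  induction n with
  | zero => simp
  | succ n ih =>
    rw [Finset.prod_Icc_succ_top (by omega), ih, Finset.prod_range_succ _ (n + 1)]
    have : ∏ j ∈ Finset.range (n + 1), ((j : ℝ) ^ 2 + j + 1) ≠ 0 :=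
      Finset.prod_ne_zero_iff.mpr fun j _ ↦ by positivity
    push_cast [Nat.factorial_succ]
    field_simp
    ring

theorem stmt_11 :
    Tendsto (fun m : ℕ =>
        ∏ i ∈ Finset.Icc 1 m, ((i : ℝ) + (i : ℝ) ^ 2) / (1 + (i : ℝ) + (i : ℝ) ^ 2))
      atTop (nhds (π / Real.cosh (Real.sqrt 3 * π / 2))) := by
  set ω : ℂ := 1 / 2 + ((√3 / 2 : ℝ) : ℂ) * Complex.I
  have hω : ω * (1 - ω) = 1 := by
    have hy : ((√3 / 2 : ℝ) : ℂ) ^ 2 = 3 / 4 := by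
      norm_cast
      rw [div_pow, sq_sqrt zero_le_three]
      norm_num
    linear_combination -Complex.I ^ 2 * hy - (3 / 4 : ℂ) * Complex.I_sq
  have hGamma : Tendsto (fun n : ℕ ↦
      Complex.GammaSeq ω n * Complex.GammaSeq (1 - ω) n / (n / (n + 1)))
      atTop (𝓝 (π / Real.cosh (√3 * π / 2) : ℝ)) := by
    have := ((Complex.GammaSeq_tendsto_Gamma ω).mul
      (Complex.GammaSeq_tendsto_Gamma (1 - ω))).div
      (tendsto_natCast_div_add_atTop (1 : ℂ)) one_ne_zero
    rwa [Complex.Gamma_half_add_mul_I_mul_Gamma_one_sub, div_one,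
      show π * (√3 / 2) = √3 * π / 2 by ring] at this
  rw [← tendsto_ofReal_iff]
  refine hGamma.congr' ((eventually_ne_atTop 0).mono fun n hn ↦ ?_)
  have hD : ∏ j ∈ Finset.range (n + 1), ((j : ℂ) ^ 2 + j + 1) ≠ 0 := by
    exact_mod_cast Finset.prod_ne_zero_iff.mpr fun j _ ↦ by positivity
  dsimp only
  rw [Complex.GammaSeq_mul_GammaSeq_one_sub _ hn, hω, prod_Icc_add_sq_div_one_add_add_sq]
  push_cast [Nat.factorial_succ]
  field_simp
end
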